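/- arXiv:1904.11863 — 5 statements merged into one kernel-verified Lean document; each statement's English description precedes it below -/
import Mathlib

section
/- Let d ≥ 1, let K ⊆ A⁺ be a prefix code with synchronization delay d, and let H ⊆ K. Then the language (K \ H)*·H is a prefix code with synchronization delay d + 1. -/
open Computability

instance {α : Type*} : Union (Language α) := ⟨Set.union⟩
instance {α : Type*} : Inter (Language α) := ⟨Set.inter⟩
instance {α : Type*} : HasSubset (Language α) := ⟨fun l m => ∀ x ∈ l, x ∈ m⟩
instance {α : Type*} : EmptyCollection (Language α) := ⟨fun _ => False⟩

/-- A prefix code: `ε ∉ K` and no word of `K` is a strict prefix of another word of `K`. -/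
def IsPrefixCode {A : Type*} (K : Language A) : Prop :=
  [] ∉ K ∧ ∀ u v : List A, u ∈ K → v ∈ K → u <+: v → u = v

/-- `K` has synchronization delay `d`: if `u·v·w ∈ K⁺` and `v ∈ K^d` then `u·v ∈ K⁺`. -/
def HasSyncDelay {A : Type*} (K : Language A) (d : ℕ) : Prop :=
  ∀ u v w : List A, u ++ v ++ w ∈ K * K∗ → v ∈ K ^ d → u ++ v ∈ K * K∗

section Aux

variable {A : Type*} {K H M : Language A}

/-- Membership in `M⁺` as a nonempty flatten. -/
lemma mem_plus_iff {z : List A} :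
    z ∈ M * M∗ ↔ ∃ ms : List (List A), ms ≠ [] ∧ (∀ m ∈ ms, m ∈ M) ∧ ms.flatten = z := by
  constructor
  · intro h
    obtain ⟨a, ha, r, hr, rfl⟩ := Language.mem_mul.mp h
    obtain ⟨rs, rfl, hrs⟩ := Language.mem_kstar.mp hr
    refine ⟨a :: rs, by simp, ?_, by simp⟩
    intro m hm
    rcases List.mem_cons.mp hm with rfl | hm
    · exact ha
    · exact hrs _ hm
  · rintro ⟨ms, hne, hM, rfl⟩
    cases ms with
    | nil => simp at hne
    | cons a rest =>
      rw [List.flatten_cons]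
      exact Language.append_mem_mul (hM a (.head _))
        (Language.join_mem_kstar fun y hy => hM y (.tail _ hy))

lemma cons_mem_kstar {a x : List A} (ha : a ∈ M) (hx : x ∈ M∗) : a ++ x ∈ M∗ := by
  obtain ⟨xs, rfl, hxs⟩ := Language.mem_kstar.mp hx
  rw [← List.flatten_cons]
  exact Language.join_mem_kstar (by
    intro y hy
    rcases List.mem_cons.mp hy with rfl | hy
    · exact ha
    · exact hxs _ hy)

lemma plus_mem_kstar {z : List A} (h : z ∈ M * M∗) : z ∈ M∗ := by
  obtain ⟨a, ha, r, hr, rfl⟩ := Language.mem_mul.mp h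
  exact cons_mem_kstar ha hr

/-- Matching lemma for prefix codes: a prefix relation between flattenings of `K`-word lists
lifts to the lists themselves. -/
lemma flatten_prefix (hKpos : ∀ w ∈ K, w ≠ ([] : List A))
    (hpc : ∀ u v : List A, u ∈ K → v ∈ K → u <+: v → u = v)
    (ms : List (List A)) :
    ∀ ns : List (List A), (∀ m ∈ ms, m ∈ K) → (∀ n ∈ ns, n ∈ K) →
      ms.flatten <+: ns.flatten → ms <+: ns := by
  induction ms with
  | nil => intro ns _ _ _; exact List.nil_prefix
  | cons a ms ih =>
    intro ns hms hns h
    cases ns with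
    | nil =>
      exfalso
      rw [List.flatten_nil, List.prefix_nil, List.flatten_cons] at h
      have : a = [] := by
        have := congrArg List.length h
        simp at this
        exact this.1
      exact hKpos a (hms a (.head _)) this
    | cons b ns =>
      have hab : a = b := by
        have ha : a <+: (b :: ns).flatten := by
          refine List.IsPrefix.trans ?_ h
          rw [List.flatten_cons]
          exact List.prefix_append a ms.flatten
        have hb : b <+: (b :: ns).flatten := by
          rw [List.flatten_cons]
          exact List.prefix_append b ns.flatten
        rcases List.prefix_or_prefix_of_prefix ha hb with h' | h'
        · exact hpc _ _ (hms a (.head _)) (hns b (.head _)) h'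
        · exact (hpc _ _ (hns b (.head _)) (hms a (.head _)) h').symm
      subst hab
      rw [List.flatten_cons, List.flatten_cons, List.prefix_append_right_inj] at h
      rw [List.cons_prefix_cons]
      exact ⟨rfl, ih ns (fun m hm => hms m (.tail _ hm)) (fun n hn => hns n (.tail _ hn)) h⟩

/-- Every element of `(K \ H)∗ · H` is a flatten of `K`-words followed by an `H`-word. -/
lemma L_decomp (hHK : H ⊆ K) {z : List A} (hz : z ∈ (K \ H)∗ * H) :
    ∃ (ms : List (List A)) (h : List A),
      (∀ m ∈ ms, m ∈ K ∧ m ∉ H) ∧ h ∈ H ∧ ms.flatten ++ h = z := by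
  obtain ⟨x, hx, h, hh, rfl⟩ := Language.mem_mul.mp hz
  obtain ⟨xs, rfl, hxs⟩ := Language.mem_kstar.mp hx
  exact ⟨xs, h, fun m hm => hxs m hm, hh, rfl⟩

/-- Converse direction: a flatten of `K`-words followed by an `H`-word lies in
`((K \ H)∗ · H)⁺`. -/
lemma flatten_append_mem (hHK : H ⊆ K) :
    ∀ (ms : List (List A)) (h : List A), (∀ m ∈ ms, m ∈ K) → h ∈ H →
      ms.flatten ++ h ∈ ((K \ H)∗ * H) * ((K \ H)∗ * H)∗ := by
  intro ms
  induction ms with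
  | nil =>
    intro h _ hh
    rw [List.flatten_nil, List.nil_append]
    have hL : h ∈ (K \ H)∗ * H := by
      have := Language.append_mem_mul (Language.nil_mem_kstar (K \ H)) hh
      rwa [List.nil_append] at this
    have := Language.append_mem_mul hL (Language.nil_mem_kstar ((K \ H)∗ * H))
    rwa [List.append_nil] at this
  | cons a ms ih =>
    intro h hK hh
    have ha : a ∈ K := hK a (.head _)
    have tail_mem : ms.flatten ++ h ∈ ((K \ H)∗ * H) * ((K \ H)∗ * H)∗ :=
      ih h (fun m hm => hK m (.tail _ hm)) hh
    by_cases haH : a ∈ H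
    · have haL : a ∈ (K \ H)∗ * H := by
        have := Language.append_mem_mul (Language.nil_mem_kstar (K \ H)) haH
        rwa [List.nil_append] at this
      have := Language.append_mem_mul haL (plus_mem_kstar tail_mem)
      rw [List.flatten_cons, List.append_assoc]
      exact this
    · obtain ⟨l, hl, r, hr, hlr⟩ := Language.mem_mul.mp tail_mem
      obtain ⟨x, hx, h', hh', rfl⟩ := Language.mem_mul.mp hl
      have hax : a ++ x ∈ (K \ H)∗ := cons_mem_kstar ⟨ha, haH⟩ hx
      have haxh : (a ++ x) ++ h' ∈ (K \ H)∗ * H := Language.append_mem_mul hax hh'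
      have := Language.append_mem_mul haxh hr
      rw [List.flatten_cons]
      have heq : a ++ x ++ h' ++ r = a ++ (ms.flatten ++ h) := by
        rw [← hlr]; simp [List.append_assoc]
      rw [List.append_assoc, ← heq]
      exact this

/-- `((K \ H)∗ · H)⁺ ⊆ K⁺`, in decomposition form. -/
lemma Lplus_decomp (hHK : H ⊆ K) {z : List A}
    (hz : z ∈ ((K \ H)∗ * H) * ((K \ H)∗ * H)∗) :
    ∃ (ms : List (List A)) (h : List A),
      (∀ m ∈ ms, m ∈ K) ∧ h ∈ H ∧ ms.flatten ++ h = z := by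
  rw [← Language.mul_self_kstar_comm] at hz
  obtain ⟨r, hr, l, hl, rfl⟩ := Language.mem_mul.mp hz
  obtain ⟨xs, hword, hxs, hh, hxh⟩ := L_decomp hHK hl
  -- r ∈ L∗ ⊆ K∗
  have hrK : r ∈ K∗ := by
    have hLK : (K \ H)∗ * H ≤ K∗ := by
      intro z hz
      obtain ⟨ms, h', hms, hh', rfl⟩ := L_decomp hHK hz
      refine Language.mem_kstar.mpr ⟨ms ++ [h'], by simp, ?_⟩
      intro y hy
      rcases List.mem_append.mp hy with hy | hy
      · exact (hms y hy).1
      · rw [List.mem_singleton] at hy; subst hy; exact hHK _ hh'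
    have : r ∈ K∗∗ := by
      obtain ⟨rs, rfl, hrs⟩ := Language.mem_kstar.mp hr
      exact Language.join_mem_kstar fun y hy => hLK (hrs y hy)
    rwa [kstar_idem] at this
  obtain ⟨rs, rfl, hrs⟩ := Language.mem_kstar.mp hrK
  refine ⟨rs ++ xs, hword, ?_, hh, ?_⟩
  · intro m hm
    rcases List.mem_append.mp hm with hm | hm
    · exact hrs m hm
    · exact (hxs m hm).1
  · rw [List.flatten_append, List.append_assoc, hxh]

end Aux

/-- If `K` is a prefix code with synchronization delay `d` and `H ⊆ K`, then
`(K \ H)*·H` is a prefix code with synchronization delay `d + 1`. -/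
theorem sdiff_star_mul_prefixCode_syncDelay {A : Type*} (d : ℕ) (hd : 1 ≤ d)
    (K : Language A) (hKpos : ∀ w ∈ K, w ≠ ([] : List A))
    (hpc : IsPrefixCode K) (hsd : HasSyncDelay K d) (H : Language A) (hHK : H ⊆ K) :
    IsPrefixCode ((K \ H)∗ * H) ∧ HasSyncDelay ((K \ H)∗ * H) (d + 1) := by
  obtain ⟨hKnil, hKpc⟩ := hpc
  constructor
  · constructor
    · intro hnil
      obtain ⟨ms, h, hms, hh, heq⟩ := L_decomp hHK hnil
      have : h = [] := by
        have := congrArg List.length heq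
        simp at this
        exact this.2
      exact hKpos h (hHK h hh) this
    · intro u v hu hv huv
      obtain ⟨us, hu', hus, hhu, hequ⟩ := L_decomp hHK hu
      obtain ⟨vs, hv', hvs, hhv, heqv⟩ := L_decomp hHK hv
      -- u = (us ++ [hu']).flatten, v = (vs ++ [hv']).flatten
      have hu2 : (us ++ [hu']).flatten = u := by rw [List.flatten_append]; simpa using hequ
      have hv2 : (vs ++ [hv']).flatten = v := by rw [List.flatten_append]; simpa using heqv
      have husK : ∀ m ∈ us ++ [hu'], m ∈ K := by
        intro m hm
        rcases List.mem_append.mp hm with hm | hm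
        · exact (hus m hm).1
        · rw [List.mem_singleton] at hm; subst hm; exact hHK _ hhu
      have hvsK : ∀ m ∈ vs ++ [hv'], m ∈ K := by
        intro m hm
        rcases List.mem_append.mp hm with hm | hm
        · exact (hvs m hm).1
        · rw [List.mem_singleton] at hm; subst hm; exact hHK _ hhv
      have hpre : (us ++ [hu']) <+: (vs ++ [hv']) := by
        apply flatten_prefix hKpos hKpc _ _ husK hvsK
        rw [hu2, hv2]; exact huv
      obtain ⟨t, ht⟩ := hpre
      rcases List.eq_nil_or_concat t with rfl | ⟨t₀, tl, rfl⟩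
      · rw [List.append_nil] at ht
        rw [← hu2, ← hv2, ht]
      · exfalso
        -- vs = us ++ hu' :: t₀, hence hu' ∈ vs, contradicting hu' ∈ H
        have : (us ++ [hu'] ++ t₀) ++ [tl] = vs ++ [hv'] := by
          rw [← ht, List.concat_eq_append]
          simp [List.append_assoc]
        have hvs_eq : us ++ [hu'] ++ t₀ = vs := by
          have := congrArg List.dropLast this
          rwa [List.dropLast_concat, List.dropLast_concat] at this
        have hmem : hu' ∈ vs := by
          rw [← hvs_eq]
          exact List.mem_append.mpr (Or.inl (List.mem_append.mpr (Or.inr (List.mem_singleton_self _))))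
        exact (hvs hu' hmem).2 hhu
  · -- synchronization delay d + 1
    intro u v w huvw hv
    obtain ⟨S, hvS, hSlen, hSL⟩ := Language.mem_pow.mp hv
    have hSne : S ≠ [] := by
      intro h; rw [h] at hSlen; simp at hSlen
    -- split off the last block of v
    have hSsplit : S.dropLast ++ [S.getLast hSne] = S := List.dropLast_concat_getLast hSne
    set c := S.getLast hSne with hc
    have hcL : c ∈ (K \ H)∗ * H := hSL _ (List.getLast_mem hSne)
    obtain ⟨cs, h, hcs, hh, hch⟩ := L_decomp hHK hcL
    -- decompose the first d blocks into K-words, at least d of them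
    have hdrop : ∀ x ∈ S.dropLast, x ∈ (K \ H)∗ * H := fun x hx =>
      hSL x ((List.dropLast_sublist (l := S)).subset hx)
    have key : ∀ (T : List (List A)), (∀ x ∈ T, x ∈ (K \ H)∗ * H) →
        ∃ ms : List (List A), (∀ m ∈ ms, m ∈ K) ∧ ms.flatten = T.flatten ∧
          T.length ≤ ms.length := by
      intro T
      induction T with
      | nil => intro _; exact ⟨[], by simp, rfl, le_refl _⟩
      | cons a T ih =>
        intro hT
        obtain ⟨ms, hms, hmseq, hlen⟩ := ih fun x hx => hT x (.tail _ hx)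
        obtain ⟨xs, h', hxs, hh', hxh⟩ := L_decomp hHK (hT a (.head _))
        refine ⟨(xs ++ [h']) ++ ms, ?_, ?_, ?_⟩
        · intro m hm
          rcases List.mem_append.mp hm with hm | hm
          · rcases List.mem_append.mp hm with hm | hm
            · exact (hxs m hm).1
            · rw [List.mem_singleton] at hm; subst hm; exact hHK _ hh'
          · exact hms m hm
        · rw [List.flatten_append, List.flatten_append, List.flatten_cons, hmseq]
          simp [hxh]
        · simp only [List.length_append, List.length_cons, List.length_singleton]
          omega
    obtain ⟨ms, hmsK, hmseq, hmslen⟩ := key S.dropLast hdrop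
    have hdlen : d ≤ ms.length := by
      have : S.dropLast.length = d := by
        rw [List.length_dropLast, hSlen]; rfl
      omega
    -- split ms into its first part and its last d words
    set a := (ms.take (ms.length - d)).flatten with hadef
    set b := (ms.drop (ms.length - d)).flatten with hbdef
    have hab : a ++ b = ms.flatten := by
      rw [hadef, hbdef, ← List.flatten_append, List.take_append_drop]
    have hbpow : b ∈ K ^ d := by
      refine Language.mem_pow.mpr ⟨ms.drop (ms.length - d), rfl, ?_, ?_⟩
      · rw [List.length_drop]; omega
      · intro y hy; exact hmsK y ((List.drop_sublist _ _).subset hy)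
    -- v = a ++ b ++ (cs.flatten ++ h)
    have hveq : v = a ++ (b ++ (cs.flatten ++ h)) := by
      rw [hvS, ← hSsplit, List.flatten_append, ← hmseq, ← hab, hch]
      simp [List.append_assoc]
    -- u ++ v ++ w ∈ K⁺
    have huvwK : u ++ v ++ w ∈ K * K∗ := by
      obtain ⟨ns, h', hns, hh', hnh⟩ := Lplus_decomp hHK huvw
      refine mem_plus_iff.mpr ⟨ns ++ [h'], by simp, ?_, by rw [List.flatten_append]; simpa using hnh⟩
      intro m hm
      rcases List.mem_append.mp hm with hm | hm
      · exact hns m hm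
      · rw [List.mem_singleton] at hm; subst hm; exact hHK _ hh'
    -- apply sync delay of K with u' = u ++ a, v' = b, w' = cs.flatten ++ h ++ w
    have hre : (u ++ a) ++ b ++ ((cs.flatten ++ h) ++ w) = u ++ v ++ w := by
      rw [hveq]; simp [List.append_assoc]
    have huab : (u ++ a) ++ b ∈ K * K∗ := by
      apply hsd (u ++ a) b ((cs.flatten ++ h) ++ w) _ hbpow
      rw [hre]; exact huvwK
    -- conclude: u ++ v = ((u ++ a) ++ b) ++ cs.flatten ++ h ∈ L⁺
    obtain ⟨ns, hnsne, hnsK, hnseq⟩ := mem_plus_iff.mp huab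
    have final : (ns ++ cs).flatten ++ h ∈ ((K \ H)∗ * H) * ((K \ H)∗ * H)∗ := by
      apply flatten_append_mem hHK _ _ _ hh
      intro m hm
      rcases List.mem_append.mp hm with hm | hm
      · exact hnsK m hm
      · exact (hcs m hm).1
    have : (ns ++ cs).flatten ++ h = u ++ v := by
      rw [List.flatten_append, hnseq, hveq]
      simp [List.append_assoc]
    rwa [this] at final
end

section
/- Let K ⊆ A⁺ be a prefix code, H ⊆ K, U ⊆ (K \ H)* and W ⊆ H*. Then the concatenation U·H·W is unambiguous: every word of U·H·W has a unique decomposition u·h·w with u ∈ U, h ∈ H, w ∈ W. -/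
open Computability

/-- Unique factorization over a prefix code. -/
theorem prefixCode_factor_unique {A : Type*} {K : Language A} (hpc : IsPrefixCode K) :
    ∀ L₁ L₂ : List (List A), (∀ y ∈ L₁, y ∈ K) → (∀ y ∈ L₂, y ∈ K) →
      L₁.flatten = L₂.flatten → L₁ = L₂ := by
  intro L₁
  induction L₁ with
  | nil =>
    intro L₂ _ h₂ hj
    cases L₂ with
    | nil => rfl
    | cons b t =>
      exfalso
      simp only [List.flatten_nil, List.flatten_cons] at hj
      have hb : b ∈ K := h₂ b (by simp)
      have : b = [] := by
        cases b with
        | nil => rfl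
        | cons c cs => simp at hj
      exact hpc.1 (this ▸ hb)
  | cons a t ih =>
    intro L₂ h₁ h₂ hj
    cases L₂ with
    | nil =>
      exfalso
      simp only [List.flatten_cons, List.flatten_nil] at hj
      have ha : a ∈ K := h₁ a (by simp)
      have : a = [] := by
        cases a with
        | nil => rfl
        | cons c cs => simp at hj
      exact hpc.1 (this ▸ ha)
    | cons b s =>
      simp only [List.flatten_cons] at hj
      have hab : a = b := by
        rcases List.prefix_or_prefix_of_prefix (List.prefix_append a t.flatten)
          (hj ▸ List.prefix_append b s.flatten) with h | h
        · exact hpc.2 a b (h₁ a (by simp)) (h₂ b (by simp)) h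
        · exact (hpc.2 b a (h₂ b (by simp)) (h₁ a (by simp)) h).symm
      subst hab
      have hts : t.flatten = s.flatten := by
        exact List.append_cancel_left hj
      have := ih s (fun y hy => h₁ y (by simp [hy])) (fun y hy => h₂ y (by simp [hy])) hts
      rw [this]

/-- Splitting a list at the first element in H is unique when prefix parts avoid H. -/
theorem split_unique {A : Type*} {H : Language A} :
    ∀ (l₁ l₂ : List (List A)) (h₁ h₂ : List A) (r₁ r₂ : List (List A)),
      (∀ y ∈ l₁, y ∉ H) → (∀ y ∈ l₂, y ∉ H) → h₁ ∈ H → h₂ ∈ H →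
      l₁ ++ h₁ :: r₁ = l₂ ++ h₂ :: r₂ → l₁ = l₂ ∧ h₁ = h₂ ∧ r₁ = r₂ := by
  intro l₁
  induction l₁ with
  | nil =>
    intro l₂ h₁ h₂ r₁ r₂ _ hn₂ hh₁ hh₂ he
    cases l₂ with
    | nil => simpa using he
    | cons b t =>
      simp only [List.nil_append, List.cons_append, List.cons.injEq] at he
      exact absurd (he.1 ▸ hh₁) (hn₂ b (by simp))
  | cons a t ih =>
    intro l₂ h₁ h₂ r₁ r₂ hn₁ hn₂ hh₁ hh₂ he
    cases l₂ with
    | nil =>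
      simp only [List.cons_append, List.nil_append, List.cons.injEq] at he
      exact absurd (he.1 ▸ hh₂) (hn₁ a (by simp))
    | cons b s =>
      simp only [List.cons_append, List.cons.injEq] at he
      obtain ⟨hl, hh, hr⟩ := ih s h₁ h₂ r₁ r₂ (fun y hy => hn₁ y (by simp [hy]))
        (fun y hy => hn₂ y (by simp [hy])) hh₁ hh₂ he.2
      exact ⟨by rw [he.1, hl], hh, hr⟩

/-- If `K` is a prefix code, `H ⊆ K`, `U ⊆ (K \ H)*` and `W ⊆ H*`, then the
concatenation `U·H·W` is unambiguous: every word of it has a unique decomposition. -/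
theorem UHW_unambiguous {A : Type*} (K H U W : Language A)
    (hpc : IsPrefixCode K) (hHK : H ⊆ K) (hU : U ⊆ (K \ H)∗) (hW : W ⊆ H∗) :
    ∀ x : List A, x ∈ U * H * W →
      ∃! t : List A × List A × List A,
        t.1 ∈ U ∧ t.2.1 ∈ H ∧ t.2.2 ∈ W ∧ t.1 ++ t.2.1 ++ t.2.2 = x := by
  intro x hx
  rcases hx with ⟨uh, ⟨u, hu, h, hh, rfl⟩, w, hww, rfl⟩
  refine ⟨(u, h, w), ⟨hu, hh, hww, rfl⟩, ?_⟩
  rintro ⟨u', h', w'⟩ ⟨hu', hh', hw', heq⟩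
  simp only at heq
  -- get factorizations
  obtain ⟨Lu, rfl, hLu⟩ := Language.mem_kstar.mp (hU u hu)
  obtain ⟨Lu', hLu'e, hLu'⟩ := Language.mem_kstar.mp (hU u' hu')
  obtain ⟨Lw, rfl, hLw⟩ := Language.mem_kstar.mp (hW w hww)
  obtain ⟨Lw', hLw'e, hLw'⟩ := Language.mem_kstar.mp (hW w' hw')
  have hjoin : (Lu' ++ h' :: Lw').flatten = (Lu ++ h :: Lw).flatten := by
    simp only [List.flatten_append, List.flatten_cons]
    rw [← List.append_assoc, ← List.append_assoc, ← hLu'e, ← hLw'e, heq]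
  have hK₁ : ∀ y ∈ Lu' ++ h' :: Lw', y ∈ K := by
    intro y hy
    rcases List.mem_append.mp hy with hy | hy
    · exact (hLu' y hy).1
    · rcases List.mem_cons.mp hy with rfl | hy
      · exact hHK y hh'
      · exact hHK y (hLw' y hy)
  have hK₂ : ∀ y ∈ Lu ++ h :: Lw, y ∈ K := by
    intro y hy
    rcases List.mem_append.mp hy with hy | hy
    · exact (hLu y hy).1
    · rcases List.mem_cons.mp hy with rfl | hy
      · exact hHK y hh
      · exact hHK y (hLw y hy)
  have hlists := prefixCode_factor_unique hpc _ _ hK₁ hK₂ hjoin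
  obtain ⟨hl, hhh, hr⟩ := split_unique Lu' Lu h' h Lw' Lw
    (fun y hy => (hLu' y hy).2) (fun y hy => (hLu y hy).2) hh' hh hlists
  have : u' = Lu.flatten := by rw [hLu'e, hl]
  have hw'' : w' = Lw.flatten := by rw [hLw'e, hr]
  simp_all
end

section
/- Let τ : 2^{A*} → Q be a nice rating map and C a Boolean algebra of languages over A. Then the element I = τ(L), where L is any C-optimal ε-approximation for τ, equals the sum over all q ∈ Q such that {ε} is not C-separable from τ⁻¹(q) ∩ A* (viewing τ restricted to singletons as a map A* → Q). -/
/-!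
Order `Q` by `q ≤ r ↔ q + r = r`. Every `q` in the sum `I` is the value of some word of `L`
(otherwise `L` itself separates `ε` from `τ_*⁻¹(q)`), so `I ≤ τ(L)`. Conversely, intersecting one
separator for each remaining value gives `K ∈ C` with `ε ∈ K` all of whose words take values
among the summands of `I`; by niceness `τ(K)` is a sum of such values, so
`τ(L) ≤ τ(K) ≤ I` by optimality.
-/

open Classical

open Computability

namespace AddSubmonoid

variable {Q : Type*} [AddCommMonoid Q]

/-- The elements `q` with `q + x = x`; when `Q` is idempotent these are the `q ≤ x`. -/
def absorbedBy (x : Q) : AddSubmonoid Q where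
  carrier := {q | q + x = x}
  zero_mem' := zero_add x
  add_mem' {a b} ha hb := by
    simp only [Set.mem_ofPred_eq] at ha hb ⊢
    rw [add_assoc, hb, ha]

theorem mem_absorbedBy {q x : Q} : q ∈ absorbedBy x ↔ q + x = x := Iff.rfl

theorem eq_of_mem_absorbedBy_of_mem_absorbedBy {a b : Q}
    (hab : a ∈ absorbedBy b) (hba : b ∈ absorbedBy a) : a = b :=
  calc a = b + a := hba.symm
    _ = a + b := add_comm b a
    _ = b := hab

theorem mem_absorbedBy_trans {a b c : Q} (hab : a ∈ absorbedBy b)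
    (hbc : b ∈ absorbedBy c) : a ∈ absorbedBy c :=
  calc a + c = a + (b + c) := by rw [hbc]
    _ = b + c := by rw [← add_assoc, hab]
    _ = c := hbc

theorem mem_absorbedBy_sum_of_mem {ι : Type*} (hidem : ∀ q : Q, q + q = q) {s : Finset ι}
    (f : ι → Q) {i : ι} (hi : i ∈ s) :
    f i ∈ absorbedBy (∑ j ∈ s, f j) := by
  rw [mem_absorbedBy, ← Finset.add_sum_erase s f hi, ← add_assoc, hidem]

end AddSubmonoid

section Languages

variable {A : Type*}

theorem mem_absorbedBy_of_subset {Q : Type*} [AddCommMonoid Q] {τ : Language A → Q}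
    (hτadd : ∀ K L : Language A, τ (K ∪ L) = τ K + τ L) {K M : Language A} (hKM : K ⊆ M) :
    τ K ∈ AddSubmonoid.absorbedBy (τ M) := by
  have hunion : K ∪ M = M := Set.union_eq_self_of_subset_left hKM
  rw [AddSubmonoid.mem_absorbedBy, ← hτadd, hunion]

theorem exists_common_separator {β : Type*} {C : Set (Language A)}
    (hInter : ∀ L ∈ C, ∀ L' ∈ C, L ∩ L' ∈ C) {K₀ : Language A} (hK₀C : K₀ ∈ C) (hK₀ : [] ∈ K₀)
    (f : List A → β) (s : Finset β)
    (hsep : ∀ b ∈ s, ∃ K ∈ C, [] ∈ K ∧ K ∩ ({w | f w = b} : Language A) = (∅ : Language A)) :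
    ∃ K ∈ C, [] ∈ K ∧ ∀ w ∈ K, f w ∉ s := by
  induction s using Finset.induction_on with
  | empty => exact ⟨K₀, hK₀C, hK₀, fun _ _ => Finset.notMem_empty _⟩
  | @insert b s _ ih =>
    obtain ⟨K, hKC, hK, hKs⟩ := ih fun c hc => hsep c (Finset.mem_insert_of_mem hc)
    obtain ⟨Kb, hKbC, hKb, hKbsep⟩ := hsep b (Finset.mem_insert_self b s)
    refine ⟨K ∩ Kb, hInter K hKC Kb hKbC, ⟨hK, hKb⟩, fun w ⟨hwK, hwKb⟩ hw => ?_⟩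
    rcases Finset.mem_insert.mp hw with hwb | hws
    · have hmem : w ∈ Kb ∩ ({w | f w = b} : Language A) := ⟨hwKb, hwb⟩
      rw [hKbsep] at hmem
      exact hmem
    · exact hKs w hwK hws

theorem exists_mem_apply_eq_of_inter_ne_empty {β : Type*} {K : Language A} {f : List A → β}
    {b : β} (h : K ∩ ({w | f w = b} : Language A) ≠ (∅ : Language A)) : ∃ w ∈ K, f w = b := by
  by_contra! hno
  exact h (Set.eq_empty_of_forall_notMem fun w hw => hno w hw.1 hw.2)

end Languages

theorem optimal_eps_approximation_eq_sum_general {A Q : Type*} [AddCommMonoid Q] [Fintype Q]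
    (hQidem : ∀ q : Q, q + q = q)
    (τ : Language A → Q)
    (hτadd : ∀ K L : Language A, τ (K ∪ L) = τ K + τ L)
    (hnice : ∀ K : Language A, (∃ w, w ∈ K) →
      ∃ l : List (List A), (∀ w ∈ l, w ∈ K) ∧ τ K = (l.map fun w => τ {w}).sum)
    (C : Set (Language A))
    (hInter : ∀ L ∈ C, ∀ L' ∈ C, L ∩ L' ∈ C)
    (L : Language A) (hLC : L ∈ C) (hLe : [] ∈ L)
    (hopt : ∀ L' ∈ C, [] ∈ L' → τ L + τ L' = τ L') :
    τ L = ∑ q ∈ Finset.univ.filter (fun q : Q =>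
        ¬ ∃ K ∈ C, [] ∈ K ∧ K ∩ ({w | τ {w} = q} : Language A) = (∅ : Language A)), q := by
  set S := Finset.univ.filter (fun q : Q =>
      ¬ ∃ K ∈ C, [] ∈ K ∧ K ∩ ({w | τ {w} = q} : Language A) = (∅ : Language A))
  have hsum_le : ∑ q ∈ S, q ∈ AddSubmonoid.absorbedBy (τ L) := by
    refine AddSubmonoid.sum_mem _ fun q hq => ?_
    have hLq : L ∩ ({w | τ {w} = q} : Language A) ≠ (∅ : Language A) := fun h =>
      (Finset.mem_filter.mp hq).2 ⟨L, hLC, hLe, h⟩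
    obtain ⟨w, hwL, rfl⟩ := exists_mem_apply_eq_of_inter_ne_empty hLq
    exact mem_absorbedBy_of_subset hτadd fun v hv => (Set.mem_singleton_iff.mp hv) ▸ hwL
  obtain ⟨K, hKC, hK, hKS⟩ := exists_common_separator hInter hLC hLe (fun w => τ {w})
    (Finset.univ.filter (· ∉ S)) fun q hq => by simpa [S] using (Finset.mem_filter.mp hq).2
  obtain ⟨l, hlK, hτK⟩ := hnice K ⟨[], hK⟩
  have hK_le : τ K ∈ AddSubmonoid.absorbedBy (∑ q ∈ S, q) := by
    rw [hτK]
    refine AddSubmonoid.list_sum_mem _ fun q hq => ?_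
    obtain ⟨w, hwl, rfl⟩ := List.mem_map.mp hq
    have hwS : τ {w} ∈ S := by simpa using hKS w (hlK w hwl)
    exact AddSubmonoid.mem_absorbedBy_sum_of_mem hQidem id hwS
  exact AddSubmonoid.eq_of_mem_absorbedBy_of_mem_absorbedBy
    (AddSubmonoid.mem_absorbedBy_trans (hopt K hKC hK) hK_le) hsum_le

/-- For a nice rating map `τ` and a Boolean algebra `C`, the value `τ(L)` of any
`C`-optimal `ε`-approximation `L` equals the sum of all `q ∈ Q` such that `{ε}`
is not `C`-separable from `τ_*⁻¹(q)`. -/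
theorem optimal_eps_approximation_eq_sum {A Q : Type*} [AddCommMonoid Q] [Fintype Q]
    (hQidem : ∀ q : Q, q + q = q)
    (τ : Language A → Q) (hτ0 : τ (∅ : Language A) = 0)
    (hτadd : ∀ K L : Language A, τ (K ∪ L) = τ K + τ L)
    (hnice : ∀ K : Language A, (∃ w, w ∈ K) →
      ∃ l : List (List A), (∀ w ∈ l, w ∈ K) ∧ τ K = (l.map fun w => τ {w}).sum)
    (C : Set (Language A)) (hUniv : (Set.univ : Language A) ∈ C)
    (hCompl : ∀ L ∈ C, Lᶜ ∈ C)
    (hUnion : ∀ L ∈ C, ∀ L' ∈ C, L ∪ L' ∈ C)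
    (hInter : ∀ L ∈ C, ∀ L' ∈ C, L ∩ L' ∈ C)
    (L : Language A) (hLC : L ∈ C) (hLe : [] ∈ L)
    (hopt : ∀ L' ∈ C, [] ∈ L' → τ L + τ L' = τ L') :
    τ L = ∑ q ∈ Finset.univ.filter (fun q : Q =>
        ¬ ∃ K ∈ C, [] ∈ K ∧ K ∩ ({w | τ {w} = q} : Language A) = (∅ : Language A)), q :=
  optimal_eps_approximation_eq_sum_general hQidem τ hτadd hnice C hInter L hLC hLe hopt
end

section
/- Let C be a Boolean algebra of group languages closed under left and right quotients, and α : A* → M a morphism into a finite monoid. For s ∈ M, s is a C-stutter for α (meaning: every finite C-cover K of α⁻¹(s) contains some K with K ∩ K·K ≠ ∅) if and only if {ε} is not C-separable from α⁻¹(s). -/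
open Computability

/-- A group language: one recognized by a morphism into a finite group (every finite
group embeds into some symmetric group, whence this formulation). -/
def IsGroupLanguage {A : Type*} (L : Language A) : Prop :=
  ∃ (n : ℕ) (β : List A → Equiv.Perm (Fin n)) (F : Set (Equiv.Perm (Fin n))),
    β [] = 1 ∧ (∀ u v : List A, β (u ++ v) = β u * β v) ∧ L = β ⁻¹' F

/-!
Write `x ~ y` for the syntactic congruence of a language `K`. When `K` is recognized by a finite
monoid, each class of `~` is a finite Boolean combination of quotients `u⁻¹ K v⁻¹`, so it lies
in `C`, and there are only finitely many classes.

If `K ∈ C` contains `ε` and misses `L`, the classes of the words of `L` form a `C`-cover of `L`.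
A stutter `ab ∈ [w]` with `a, b ∈ [w]` gives `ww ~ w`. Since `K` is a group language, its
syntactic monoid is a group, so `w ~ ε` and `w ∈ K ∩ L`, a contradiction.
Conversely, given a `C`-cover of `L`, the classes of `ε` of its members meet in a language of
`C` that contains `ε`. This language therefore meets `L` in some `x`. If `x ∈ K` for `K` in the
cover, then `xx ~ x` gives `xx ∈ K ∩ KK`.
-/

theorem Function.FactorsThrough.finite_range {ι α β : Type*} [Finite β] {f : ι → α} {g : ι → β}
    (h : f.FactorsThrough g) : (Set.range f).Finite := by
  refine (Set.finite_range fun b : Set.range g => f b.2.choose).subset ?_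
  rintro _ ⟨i, rfl⟩
  exact ⟨⟨g i, i, rfl⟩, h (⟨i, rfl⟩ : ∃ j, g j = g i).choose_spec⟩

theorem FiniteInter.sInter_mem {α : Type*} {S T : Set (Set α)} (hS : FiniteInter S)
    (hT : T.Finite) (hTS : T ⊆ S) : ⋂₀ T ∈ S := by
  simpa using hS.finiteInter_mem hT.toFinset (by simpa using hTS)

theorem map_flatten_replicate {A G : Type*} [Monoid G] {β : List A → G} (hβ1 : β [] = 1)
    (hβ : ∀ u v, β (u ++ v) = β u * β v) (w : List A) (n : ℕ) :
    β (List.replicate n w).flatten = β w ^ n := by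
  induction n with
  | zero => simpa using hβ1
  | succ n ih => rw [List.replicate_succ, List.flatten_cons, hβ, ih, pow_succ']

namespace Language

variable {A : Type*}

def SyntacticEquiv (K : Language A) (x y : List A) : Prop :=
  ∀ u v : List A, u ++ x ++ v ∈ K ↔ u ++ y ++ v ∈ K

namespace SyntacticEquiv

variable {K : Language A} {x y z x' y' : List A}

theorem refl (K : Language A) (x : List A) : SyntacticEquiv K x x := fun _ _ => Iff.rfl

theorem symm (h : SyntacticEquiv K x y) : SyntacticEquiv K y x := fun u v => (h u v).symm

theorem trans (h : SyntacticEquiv K x y) (h' : SyntacticEquiv K y z) : SyntacticEquiv K x z :=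
  fun u v => (h u v).trans (h' u v)

theorem append (h : SyntacticEquiv K x y) (h' : SyntacticEquiv K x' y') :
    SyntacticEquiv K (x ++ x') (y ++ y') := fun u v => by
  have h₁ := h u (x' ++ v)
  have h₂ := h' (u ++ y) v
  simp only [List.append_assoc] at h₁ h₂ ⊢
  exact h₁.trans h₂

theorem mem_iff (h : SyntacticEquiv K x y) : x ∈ K ↔ y ∈ K := by
  simpa using h [] []

end SyntacticEquiv

section Recognized

variable {G : Type*} [Monoid G] {β : List A → G} {F : Set G}

theorem syntacticEquiv_of_map_eq (hβ : ∀ u v, β (u ++ v) = β u * β v) {x y : List A}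
    (hxy : β x = β y) :
    SyntacticEquiv (β ⁻¹' F) x y := fun u v => by
  show β (u ++ x ++ v) ∈ F ↔ β (u ++ y ++ v) ∈ F
  simp only [hβ, hxy]

theorem setOf_syntacticEquiv_mem [Finite G] {C : Set (Language A)} (hC : FiniteInter C)
    (hCompl : ∀ L ∈ C, Lᶜ ∈ C)
    (hQuotL : ∀ L ∈ C, ∀ w : List A, ({u | w ++ u ∈ L} : Language A) ∈ C)
    (hQuotR : ∀ L ∈ C, ∀ w : List A, ({u | u ++ w ∈ L} : Language A) ∈ C)
    (hβ : ∀ u v, β (u ++ v) = β u * β v) (hK : β ⁻¹' F ∈ C) (w : List A) :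
    ({x | SyntacticEquiv (β ⁻¹' F) x w} : Language A) ∈ C := by
  set Q : List A × List A → Language A :=
    fun p => {x | p.1 ++ x ++ p.2 ∈ β ⁻¹' F ↔ p.1 ++ w ++ p.2 ∈ β ⁻¹' F}
  have hQC : ∀ p, Q p ∈ C := by
    rintro ⟨u, v⟩
    have hquot : ({x | u ++ x ++ v ∈ β ⁻¹' F} : Language A) ∈ C := hQuotL _ (hQuotR _ hK v) u
    by_cases huwv : u ++ w ++ v ∈ β ⁻¹' F
    · have hQ : Q (u, v) = {x | u ++ x ++ v ∈ β ⁻¹' F} := Set.ext fun x => iff_true_right huwv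
      exact hQ ▸ hquot
    · have hQ : Q (u, v) = {x | u ++ x ++ v ∈ β ⁻¹' F}ᶜ :=
        Set.ext fun x => iff_false_right huwv
      exact hQ ▸ hCompl _ hquot
  have hfin : (Set.range Q).Finite := by
    refine Function.FactorsThrough.finite_range (g := fun p => (β p.1, β p.2)) ?_
    rintro ⟨u, v⟩ ⟨u', v'⟩ huv
    obtain ⟨hu, hv⟩ := Prod.mk.inj huv
    have hmem : ∀ y, u ++ y ++ v ∈ β ⁻¹' F ↔ u' ++ y ++ v' ∈ β ⁻¹' F := fun y =>
      (((syntacticEquiv_of_map_eq hβ hu).append (.refl _ y)).append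
        (syntacticEquiv_of_map_eq hβ hv)).mem_iff
    exact Set.ext fun x => iff_congr (hmem x) (hmem w)
  have hcls : ({x | SyntacticEquiv (β ⁻¹' F) x w} : Language A) = ⋂₀ Set.range Q :=
    Set.ext fun x => ⟨fun h _ ⟨p, hp⟩ => hp ▸ h p.1 p.2, fun h u v => h _ ⟨(u, v), rfl⟩⟩
  exact hcls ▸ hC.sInter_mem hfin (Set.range_subset_iff.mpr hQC)

end Recognized

section Group

variable {G : Type*} [Group G] [Finite G] {β : List A → G} {F : Set G}

theorem syntacticEquiv_nil_of_append_self (hβ1 : β [] = 1)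
    (hβ : ∀ u v, β (u ++ v) = β u * β v) {w : List A}
    (h : SyntacticEquiv (β ⁻¹' F) (w ++ w) w) : SyntacticEquiv (β ⁻¹' F) w [] := by
  -- `z` spells `(β w)⁻¹`
  set z := (List.replicate (orderOf (β w) - 1) w).flatten
  have hz : β (z ++ w) = β [] := by
    rw [hβ, map_flatten_replicate hβ1 hβ, pow_sub_one_mul (orderOf_pos _).ne', pow_orderOf_eq_one,
      hβ1]
  have h₁ : SyntacticEquiv (β ⁻¹' F) w (z ++ w ++ w) :=
    (syntacticEquiv_of_map_eq hβ hz).symm.append (.refl _ w)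
  have h₂ : SyntacticEquiv (β ⁻¹' F) (z ++ w ++ w) (z ++ w) := by
    simpa only [List.append_assoc] using (SyntacticEquiv.refl _ z).append h
  exact h₁.trans (h₂.trans (syntacticEquiv_of_map_eq hβ hz))

end Group

end Language

section Stutter

variable {A : Type*}

def IsStutter (C : Set (Language A)) (L : Language A) : Prop :=
  ∀ Kc : Finset (Language A), (∀ K ∈ Kc, K ∈ C) → (∀ w ∈ L, ∃ K ∈ Kc, w ∈ K) →
    ∃ K ∈ Kc, ∃ w : List A, w ∈ K ∩ (K * K)

open Language

theorem not_separable_of_isStutter {C : Set (Language A)} (hGL : ∀ L ∈ C, IsGroupLanguage L)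
    (hC : FiniteInter C) (hCompl : ∀ L ∈ C, Lᶜ ∈ C)
    (hQuotL : ∀ L ∈ C, ∀ w : List A, ({u | w ++ u ∈ L} : Language A) ∈ C)
    (hQuotR : ∀ L ∈ C, ∀ w : List A, ({u | u ++ w ∈ L} : Language A) ∈ C)
    {L : Language A} (hL : IsStutter C L) :
    ¬ ∃ K ∈ C, [] ∈ K ∧ K ∩ L = (∅ : Language A) := by
  rintro ⟨K, hKC, hnil, hdisj⟩
  obtain ⟨n, β, F, hβ1, hβ, rfl⟩ := hGL K hKC
  set cls : List A → Language A := fun w => {x | SyntacticEquiv (β ⁻¹' F) x w}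
  have hfin : (cls '' L).Finite := by
    refine (Function.FactorsThrough.finite_range (g := β) fun w w' hww' => ?_).subset
      (Set.image_subset_range _ _)
    have := syntacticEquiv_of_map_eq (F := F) hβ hww'
    exact Set.ext fun x => ⟨fun hx => hx.trans this, fun hx => hx.trans this.symm⟩
  obtain ⟨_, hcls, x, hxcls, hxsq⟩ := hL hfin.toFinset
    (by
      simp only [Set.Finite.mem_toFinset]
      rintro _ ⟨w, -, rfl⟩
      exact setOf_syntacticEquiv_mem hC hCompl hQuotL hQuotR hβ hKC w)
    (fun w hw => ⟨cls w, by simpa using ⟨w, hw, rfl⟩, .refl _ w⟩)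
  obtain ⟨w, hwL, rfl⟩ : _ ∈ cls '' L := by simpa using hcls
  obtain ⟨a, ha, b, hb, rfl⟩ := Language.mem_mul.mp hxsq
  have hidem : SyntacticEquiv (β ⁻¹' F) (w ++ w) w := (ha.append hb).symm.trans hxcls
  have hw : w ∈ β ⁻¹' F := (syntacticEquiv_nil_of_append_self hβ1 hβ hidem).mem_iff.mpr hnil
  exact (hdisj ▸ ⟨hw, hwL⟩ : w ∈ (∅ : Language A))

theorem isStutter_of_not_separable {C : Set (Language A)} (hGL : ∀ L ∈ C, IsGroupLanguage L)
    (hC : FiniteInter C) (hCompl : ∀ L ∈ C, Lᶜ ∈ C)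
    (hQuotL : ∀ L ∈ C, ∀ w : List A, ({u | w ++ u ∈ L} : Language A) ∈ C)
    (hQuotR : ∀ L ∈ C, ∀ w : List A, ({u | u ++ w ∈ L} : Language A) ∈ C)
    {L : Language A} (hL : ¬ ∃ K ∈ C, [] ∈ K ∧ K ∩ L = (∅ : Language A)) :
    IsStutter C L := by
  intro Kc hKcC hcover
  set E : Language A := ⋂₀ ((fun K => {x | SyntacticEquiv K x []}) '' (Kc : Set (Language A)))
  have hEC : E ∈ C := by
    refine hC.sInter_mem (Kc.finite_toSet.image _) ?_
    rintro _ ⟨K, hK, rfl⟩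
    obtain ⟨n, β, F, -, hβ, rfl⟩ := hGL K (hKcC K hK)
    exact setOf_syntacticEquiv_mem hC hCompl hQuotL hQuotR hβ (hKcC _ hK) []
  have hEL : E ∩ L ≠ ∅ := fun h => hL ⟨E, hEC, fun _ ⟨K, _, hK⟩ => hK ▸ .refl K [], h⟩
  obtain ⟨x, hxE, hxL⟩ := Set.nonempty_iff_ne_empty.mpr hEL
  obtain ⟨K, hK, hxK⟩ := hcover x hxL
  have hx : SyntacticEquiv K x [] := hxE _ ⟨K, hK, rfl⟩
  refine ⟨K, hK, x ++ x, ?_, Language.append_mem_mul hxK hxK⟩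
  exact (by simpa using (hx x []).mpr (by simpa using hxK) : x ++ x ∈ K)

end Stutter

theorem stutter_iff_not_separable_general {A M : Type*}
    (C : Set (Language A)) (hGL : ∀ L ∈ C, IsGroupLanguage L)
    (hUniv : (Set.univ : Language A) ∈ C)
    (hCompl : ∀ L ∈ C, Lᶜ ∈ C)
    (hInter : ∀ L ∈ C, ∀ L' ∈ C, L ∩ L' ∈ C)
    (hQuotL : ∀ L ∈ C, ∀ w : List A, ({u | w ++ u ∈ L} : Language A) ∈ C)
    (hQuotR : ∀ L ∈ C, ∀ w : List A, ({u | u ++ w ∈ L} : Language A) ∈ C)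
    (α : List A → M)
    (s : M) :
    (∀ Kc : Finset (Language A), (∀ K ∈ Kc, K ∈ C) →
        (∀ w : List A, α w = s → ∃ K ∈ Kc, w ∈ K) →
        ∃ K ∈ Kc, ∃ w : List A, w ∈ K ∩ (K * K)) ↔
      ¬ ∃ K ∈ C, [] ∈ K ∧ K ∩ ({w | α w = s} : Language A) = (∅ : Language A) := by
  have hC : FiniteInter C := ⟨hUniv, fun _ hK _ hK' => hInter _ hK _ hK'⟩
  exact ⟨not_separable_of_isStutter hGL hC hCompl hQuotL hQuotR,
    isStutter_of_not_separable hGL hC hCompl hQuotL hQuotR⟩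

/-- For a quotient-closed Boolean algebra `C` of group languages and a morphism
`α : A* → M` into a finite monoid, `s` is a `C`-stutter iff `{ε}` is not
`C`-separable from `α⁻¹(s)`. -/
theorem stutter_iff_not_separable {A M : Type*} [Monoid M] [Finite M]
    (C : Set (Language A)) (hGL : ∀ L ∈ C, IsGroupLanguage L)
    (hUniv : (Set.univ : Language A) ∈ C)
    (hCompl : ∀ L ∈ C, Lᶜ ∈ C)
    (hUnion : ∀ L ∈ C, ∀ L' ∈ C, L ∪ L' ∈ C)
    (hInter : ∀ L ∈ C, ∀ L' ∈ C, L ∩ L' ∈ C)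
    (hQuotL : ∀ L ∈ C, ∀ w : List A, ({u | w ++ u ∈ L} : Language A) ∈ C)
    (hQuotR : ∀ L ∈ C, ∀ w : List A, ({u | u ++ w ∈ L} : Language A) ∈ C)
    (α : List A → M) (hα1 : α [] = 1) (hαm : ∀ u v : List A, α (u ++ v) = α u * α v)
    (s : M) :
    (∀ Kc : Finset (Language A), (∀ K ∈ Kc, K ∈ C) →
        (∀ w : List A, α w = s → ∃ K ∈ Kc, w ∈ K) →
        ∃ K ∈ Kc, ∃ w : List A, w ∈ K ∩ (K * K)) ↔
      ¬ ∃ K ∈ C, [] ∈ K ∧ K ∩ ({w | α w = s} : Language A) = (∅ : Language A) :=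
  stutter_iff_not_separable_general C hGL hUniv hCompl hInter hQuotL hQuotR α s
end

section
/- Let G be a finite group, α : A* → G a surjective morphism, and L = α⁻¹(1_G). Then A* is a finite union of languages of the form L·a₁·L·a₂·L ⋯ a_ℓ·L with ℓ ∈ ℕ and a₁,…,a_ℓ ∈ A (the case ℓ = 0 giving L itself). Concretely, every word w ∈ A* can be written w = v₀a₁v₁⋯a_ℓv_ℓ with each v_i ∈ L, ℓ bounded by a function of |G|. -/
/-!
Cut `w` greedily: `v₀` is the longest prefix of `w` in `L`, the next letter is `a₁`, and the
rest is decomposed in the same way. The values of `α` on prefixes of the rest, translated by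
`α (v₀ a₁)`, are values on prefixes of `w` different from `1`, so every cut loses at least one
prefix value. Hence the number of letters `ℓ` is less than the number of values of `α` on
prefixes of `w`, which is at most `|G|`.
-/

open Computability

section

variable {A G : Type*}

theorem exists_split_at_last_one [Group G] (α : List A → G) (hα1 : α [] = 1) {w : List A}
    (hw : α w ≠ 1) :
    ∃ v a r, w = v ++ a :: r ∧ α v = 1 ∧ ∀ u, u <+: r → α (v ++ a :: u) ≠ 1 := by
  induction w using List.reverseRecOn with
  | nil => exact absurd hα1 hw
  | append_singleton w b ih =>
    by_cases hw' : α w = 1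
    · refine ⟨w, b, [], by simp, hw', fun u hu => ?_⟩
      rw [List.prefix_nil.mp hu]
      simpa using hw
    · obtain ⟨v, a, r, rfl, hv, hr⟩ := ih hw'
      refine ⟨v, a, r ++ [b], by simp, hv, fun u hu => ?_⟩
      rcases List.prefix_concat_iff.mp hu with rfl | hu
      · simpa using hw
      · exact hr u hu

variable [DecidableEq G]

def prefixValues (α : List A → G) (w : List A) : Finset G :=
  (w.inits.map α).toFinset

theorem mem_prefixValues {α : List A → G} {w : List A} {g : G} :
    g ∈ prefixValues α w ↔ ∃ u, u <+: w ∧ α u = g := by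
  simp [prefixValues, List.mem_inits]

theorem card_prefixValues_lt_of_split [Group G] (α : List A → G) (hα1 : α [] = 1)
    (hαm : ∀ u v : List A, α (u ++ v) = α u * α v) {v : List A} {a : A} {r : List A}
    (hr : ∀ u, u <+: r → α (v ++ a :: u) ≠ 1) :
    (prefixValues α r).card < (prefixValues α (v ++ a :: r)).card := by
  set c := α (v ++ [a])
  have hshift : ∀ u, α (v ++ a :: u) = c * α u := fun u => by
    rw [← hαm, List.append_assoc, List.singleton_append]
  have hsub : insert 1 ((prefixValues α r).image (c * ·)) ⊆ prefixValues α (v ++ a :: r) := by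
    intro g hg
    rcases Finset.mem_insert.mp hg with rfl | hg
    · exact mem_prefixValues.mpr ⟨[], List.nil_prefix, hα1⟩
    · obtain ⟨_, hx, rfl⟩ := Finset.mem_image.mp hg
      obtain ⟨u, hu, rfl⟩ := mem_prefixValues.mp hx
      exact mem_prefixValues.mpr ⟨v ++ a :: u, by simpa using hu, hshift u⟩
  have hone : (1 : G) ∉ (prefixValues α r).image (c * ·) := by
    simp only [Finset.mem_image, mem_prefixValues, not_exists, not_and]
    rintro _ ⟨u, hu, rfl⟩ h
    exact hr u hu (h ▸ hshift u)
  calc (prefixValues α r).card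
      = ((prefixValues α r).image (c * ·)).card :=
        (Finset.card_image_of_injective _ (mul_right_injective c)).symm
    _ < (insert 1 ((prefixValues α r).image (c * ·))).card := by
        rw [Finset.card_insert_of_notMem hone]; exact Nat.lt_succ_self _
    _ ≤ _ := Finset.card_le_card hsub

theorem exists_decomposition_length_lt_card_prefixValues [Group G] (α : List A → G)
    (hα1 : α [] = 1) (hαm : ∀ u v : List A, α (u ++ v) = α u * α v) (w : List A) :
    ∃ (p : List (List A × A)) (v : List A),
      p.length < (prefixValues α w).card ∧ (∀ q ∈ p, α q.1 = 1) ∧ α v = 1 ∧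
        w = (p.map fun q => q.1 ++ [q.2]).flatten ++ v := by
  by_cases hw : α w = 1
  · have hone : 1 ∈ prefixValues α w := mem_prefixValues.mpr ⟨[], List.nil_prefix, hα1⟩
    exact ⟨[], w, Finset.card_pos.mpr ⟨1, hone⟩, by simp, hw, by simp⟩
  · obtain ⟨v, a, r, rfl, hv, hr⟩ := exists_split_at_last_one α hα1 hw
    obtain ⟨p, v', hp, hpq, hv', rfl⟩ :=
      exists_decomposition_length_lt_card_prefixValues α hα1 hαm r
    refine ⟨(v, a) :: p, v', ?_, ?_, hv', by simp⟩
    · exact (Nat.succ_lt_succ hp).trans_le (card_prefixValues_lt_of_split α hα1 hαm hr)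
    · rintro q (_ | ⟨_, hq⟩)
      exacts [hv, hpq q hq]
termination_by w.length
decreasing_by subst_vars; simp; omega

end

theorem univ_decomposition_group_general {A G : Type*} [Group G] [Finite G]
    (α : List A → G) (hα1 : α [] = 1) (hαm : ∀ u v : List A, α (u ++ v) = α u * α v) :
    ∃ B : ℕ, ∀ w : List A,
      ∃ (p : List (List A × A)) (v : List A),
        p.length ≤ B ∧ (∀ q ∈ p, α q.1 = 1) ∧ α v = 1 ∧
        w = (p.map fun q => q.1 ++ [q.2]).flatten ++ v := by
  classical
  have := Fintype.ofFinite G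
  refine ⟨Fintype.card G, fun w => ?_⟩
  obtain ⟨p, v, hp, hpq, hv, hw⟩ :=
    exists_decomposition_length_lt_card_prefixValues α hα1 hαm w
  exact ⟨p, v, hp.le.trans (Finset.card_le_univ _), hpq, hv, hw⟩

/-- If `α : A* → G` is a surjective morphism onto a finite group and `L = α⁻¹(1)`,
then there is a bound `B` (depending only on `G`) such that every word `w` can be
written `w = v₀·a₁·v₁⋯a_ℓ·v_ℓ` with all `vᵢ ∈ L` and `ℓ ≤ B`. Here the pairs
`(vᵢ₋₁, aᵢ)` are collected in the list `p`. -/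
theorem univ_decomposition_group {A G : Type*} [Group G] [Finite G]
    (α : List A → G) (hα1 : α [] = 1) (hαm : ∀ u v : List A, α (u ++ v) = α u * α v)
    (hsurj : Function.Surjective α) :
    ∃ B : ℕ, ∀ w : List A,
      ∃ (p : List (List A × A)) (v : List A),
        p.length ≤ B ∧ (∀ q ∈ p, α q.1 = 1) ∧ α v = 1 ∧
        w = (p.map fun q => q.1 ++ [q.2]).flatten ++ v :=
  univ_decomposition_group_general α hα1 hαm
end
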